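/- arXiv:1403.3359 — 6 statements merged into one kernel-verified Lean document; each statement's English description precedes it below -/
import Mathlib

section
/- For the time-varying AR(2) equation, the k-step-ahead forecast error y_t − E[y_t | 𝔽_{t-k}] equals Σ_{i=0}^{k-1} ξ_{t,i}·ε_{t-i}, and hence its conditional variance equals Σ_{i=0}^{k-1} ξ_{t,i}²·σ_{t-i}², where σ_τ² = E[ε_τ²]. -/
/-!
Iterating the AR(2) recursion `k` times writes `y_t` as a forecast that is affine in
`y_{t-k}` and `y_{t-k-1}` (hence `𝔽_{t-k}`-measurable) plus the noise `Σ_{i<k} ξ_{t,i} ε_{t-i}`;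
the coefficients come out right because the tridiagonal determinant `ξ_{t,i}` can also be
expanded along its last row. Each `ε_{t-i}` with `i < k` is a martingale difference, so the
noise has zero conditional expectation given `𝔽_{t-k}` and is exactly the forecast error.
Its second moment is a sum of squares since the `ε_τ` are uncorrelated.
-/

open MeasureTheory Finset

/-- `ξ t i` is the determinant of the `i × i` tridiagonal matrix of the paper, characterised by
its expansion along the first row. -/
structure IsTridiagonalDet (φ₁ φ₂ : ℤ → ℝ) (ξ : ℤ → ℤ → ℝ) : Prop where
  zero : ∀ t, ξ t 0 = 1
  neg_one : ∀ t, ξ t (-1) = 0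
  step : ∀ t i : ℤ, 1 ≤ i → ξ t i = φ₁ t * ξ (t - 1) (i - 1) + φ₂ t * ξ (t - 2) (i - 2)

namespace IsTridiagonalDet

variable {φ₁ φ₂ : ℤ → ℝ} {ξ : ℤ → ℤ → ℝ}

theorem succ_eq (hξ : IsTridiagonalDet φ₁ φ₂ ξ) (n : ℕ) (t : ℤ) :
    ξ t (n + 1) = φ₁ (t - n) * ξ t n + φ₂ (t - n + 1) * ξ t (n - 1) := by
  induction n using Nat.twoStepInduction generalizing t with
  | zero =>
    have h1 := hξ.step t 1 le_rfl
    norm_num [hξ.zero, hξ.neg_one] at h1 ⊢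
    exact h1
  | one =>
    have h2 := hξ.step t 2 (by norm_num)
    have h1 := hξ.step t 1 le_rfl
    have h1' := hξ.step (t - 1) 1 le_rfl
    norm_num [hξ.zero, hξ.neg_one] at h2 h1 h1' ⊢
    rw [h2, h1, h1']
    ring
  | more n ih₀ ih₁ =>
    have hA := hξ.step t (n + 3) (by omega)
    have hB := hξ.step t (n + 2) (by omega)
    have hC := hξ.step t (n + 1) (by omega)
    have hD := ih₁ (t - 1)
    have hE := ih₀ (t - 2)
    push_cast at hA hB hC hD hE ⊢
    linear_combination (norm := ring_nf)
      hA + φ₁ t * hD + φ₂ t * hE - φ₁ (t - n - 2) * hB - φ₂ (t - n - 1) * hC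

theorem eq_sum_add_of_rec (hξ : IsTridiagonalDet φ₁ φ₂ ξ) {y u : ℤ → ℝ}
    (hy : ∀ τ, y τ = φ₁ τ * y (τ - 1) + φ₂ τ * y (τ - 2) + u τ) (t : ℤ) (n : ℕ) :
    y t = ∑ i ∈ range n, ξ t i * u (t - i) + ξ t n * y (t - n)
      + φ₂ (t - n + 1) * ξ t (n - 1) * y (t - n - 1) := by
  induction n with
  | zero => simp [hξ.zero, hξ.neg_one]
  | succ n ih =>
    rw [sum_range_succ]
    push_cast
    linear_combination (norm := ring_nf)
      ih + ξ t n * hy (t - n) - y (t - n - 1) * hξ.succ_eq n t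

end IsTridiagonalDet

section

variable {Ω : Type*} {m m₀ : MeasurableSpace Ω} {μ : Measure Ω}

theorem condExp_ae_eq_zero_of_lt [IsFiniteMeasure μ] {𝔽 : Filtration ℤ m₀} {ε : ℤ → Ω → ℝ}
    (hε : ∀ τ, μ[ε τ | 𝔽 (τ - 1)] =ᵐ[μ] 0) {s τ : ℤ} (hsτ : s < τ) :
    μ[ε τ | 𝔽 s] =ᵐ[μ] 0 :=
  calc μ[ε τ | 𝔽 s]
      =ᵐ[μ] μ[μ[ε τ | 𝔽 (τ - 1)] | 𝔽 s] :=
        (condExp_condExp_of_le (𝔽.mono (by omega)) (𝔽.le _)).symm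
    _ =ᵐ[μ] μ[0 | 𝔽 s] := condExp_congr_ae (hε τ)
    _ = 0 := condExp_zero

theorem condExp_sum_mul_ae_eq_zero {ι : Type*} (s : Finset ι) {X : ι → Ω → ℝ}
    (hX : ∀ i ∈ s, Integrable (X i) μ) (h : ∀ i ∈ s, μ[X i | m] =ᵐ[μ] 0) (c : ι → ℝ) :
    μ[fun ω => ∑ i ∈ s, c i * X i ω | m] =ᵐ[μ] 0 := by
  have hsum : (fun ω => ∑ i ∈ s, c i * X i ω) = ∑ i ∈ s, c i • X i := by
    ext ω; simp
  rw [hsum]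
  have hterm : ∀ i ∈ s, μ[c i • X i | m] =ᵐ[μ] 0 := fun i hi => by
    filter_upwards [condExp_smul (c i) (X i) m, h i hi] with ω h₁ h₂
    simp [h₁, h₂]
  refine (condExp_finsetSum (fun i hi => (hX i hi).smul (c i)) m).trans ?_
  simpa using eventuallyEq_sum hterm

theorem sub_condExp_ae_eq_of_eq_add (hm : m ≤ m₀) [SigmaFinite (μ.trim hm)]
    {f g h : Ω → ℝ} (hf : f = g + h) (hg : StronglyMeasurable[m] g) (hgi : Integrable g μ)
    (hhi : Integrable h μ) (hh : μ[h | m] =ᵐ[μ] 0) :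
    f - μ[f | m] =ᵐ[μ] h := by
  subst hf
  have hcond : μ[g + h | m] =ᵐ[μ] g := by
    filter_upwards [condExp_add hgi hhi m, hh] with ω h₁ h₂
    rw [h₁, Pi.add_apply, condExp_of_stronglyMeasurable hm hg hgi, h₂]
    simp
  filter_upwards [hcond] with ω hω
  simp [hω]

theorem integral_sq_sum_mul_of_uncorrelated {ι : Type*} (s : Finset ι) {X : ι → Ω → ℝ}
    (hX : ∀ i ∈ s, MemLp (X i) 2 μ)
    (hunc : ∀ i ∈ s, ∀ j ∈ s, i ≠ j → ∫ ω, X i ω * X j ω ∂μ = 0) (c : ι → ℝ) :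
    ∫ ω, (∑ i ∈ s, c i * X i ω) ^ 2 ∂μ = ∑ i ∈ s, c i ^ 2 * ∫ ω, X i ω ^ 2 ∂μ := by
  have hmul : ∀ i ∈ s, ∀ j ∈ s, Integrable (fun ω => X i ω * X j ω) μ :=
    fun i hi j hj => (hX i hi).integrable_mul (hX j hj)
  calc ∫ ω, (∑ i ∈ s, c i * X i ω) ^ 2 ∂μ
      = ∫ ω, ∑ i ∈ s, ∑ j ∈ s, c i * c j * (X i ω * X j ω) ∂μ := by
        congr with ω
        rw [sq, sum_mul_sum]
        exact sum_congr rfl fun i _ => sum_congr rfl fun j _ => by ring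
    _ = ∑ i ∈ s, ∑ j ∈ s, c i * c j * ∫ ω, X i ω * X j ω ∂μ := by
        rw [integral_finsetSum _ fun i hi =>
          integrable_finsetSum _ fun j hj => (hmul i hi j hj).const_mul _]
        refine sum_congr rfl fun i hi => ?_
        rw [integral_finsetSum _ fun j hj => (hmul i hi j hj).const_mul _]
        exact sum_congr rfl fun j _ => integral_const_mul _ _
    _ = ∑ i ∈ s, c i ^ 2 * ∫ ω, X i ω ^ 2 ∂μ := by
        refine sum_congr rfl fun i hi => ?_
        rw [sum_eq_single_of_mem i hi fun j hj hji => by rw [hunc i hi j hj hji.symm, mul_zero]]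
        simp only [← sq]

end

theorem forecast_error_tvar2_general
    {Ω : Type*} {m : MeasurableSpace Ω} {μ : Measure Ω} [IsProbabilityMeasure μ]
    (𝔽 : Filtration ℤ m)
    (ε y : ℤ → Ω → ℝ) (φ₀ φ₁ φ₂ : ℤ → ℝ) (σ2 : ℤ → ℝ) (ξ : ℤ → ℤ → ℝ)
    (hξ0 : ∀ t, ξ t 0 = 1) (hξm1 : ∀ t, ξ t (-1) = 0)
    (hξrec : ∀ t i : ℤ, 1 ≤ i → ξ t i = φ₁ t * ξ (t - 1) (i - 1) + φ₂ t * ξ (t - 2) (i - 2))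
    (hεL2 : ∀ τ, MemLp (ε τ) 2 μ)
    (hεmds : ∀ τ, μ[ε τ | 𝔽 (τ - 1)] =ᵐ[μ] 0)
    (hεuncorr : ∀ s τ : ℤ, s ≠ τ → ∫ ω, ε s ω * ε τ ω ∂μ = 0)
    (hσ : ∀ τ, σ2 τ = ∫ ω, (ε τ ω) ^ 2 ∂μ)
    (hy : ∀ τ, ∀ ω, y τ ω = φ₀ τ + φ₁ τ * y (τ - 1) ω + φ₂ τ * y (τ - 2) ω + ε τ ω)
    (hyint : ∀ τ, Integrable (y τ) μ)
    (t : ℤ) (k : ℕ)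
    (hymeas : StronglyMeasurable[𝔽 (t - (k : ℤ))] (y (t - (k : ℤ))))
    (hymeas' : StronglyMeasurable[𝔽 (t - (k : ℤ))] (y (t - (k : ℤ) - 1))) :
    (y t - μ[y t | 𝔽 (t - (k : ℤ))]
        =ᵐ[μ] fun ω => ∑ i ∈ Finset.range k, ξ t i * ε (t - (i : ℤ)) ω) ∧
    ∫ ω, (∑ i ∈ Finset.range k, ξ t i * ε (t - (i : ℤ)) ω) ^ 2 ∂μ
      = ∑ i ∈ Finset.range k, (ξ t i) ^ 2 * σ2 (t - (i : ℤ)) := by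
  have hξ : IsTridiagonalDet φ₁ φ₂ ξ := ⟨hξ0, hξm1, hξrec⟩
  have hεint : ∀ τ, Integrable (ε τ) μ := fun τ => (hεL2 τ).integrable one_le_two
  set forecast : Ω → ℝ := fun ω => ∑ i ∈ range k, ξ t i * φ₀ (t - i)
    + ξ t k * y (t - k) ω + φ₂ (t - k + 1) * ξ t (k - 1) * y (t - k - 1) ω
  have hdecomp : y t = forecast + fun ω => ∑ i ∈ range k, ξ t i * ε (t - i) ω := by
    ext ω
    rw [hξ.eq_sum_add_of_rec (y := fun τ => y τ ω) (u := fun τ => φ₀ τ + ε τ ω)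
      (fun τ => by rw [hy τ ω]; ring) t k]
    simp only [forecast, Pi.add_apply, mul_add, sum_add_distrib]
    ring
  refine ⟨sub_condExp_ae_eq_of_eq_add (𝔽.le _) hdecomp ?_ ?_ ?_ ?_, ?_⟩
  · exact (stronglyMeasurable_const.add (hymeas.const_mul _)).add (hymeas'.const_mul _)
  · exact ((integrable_const _).add ((hyint _).const_mul _)).add ((hyint _).const_mul _)
  · exact integrable_finsetSum _ fun i _ => (hεint _).const_mul _
  · refine condExp_sum_mul_ae_eq_zero _ (fun i _ => hεint _) (fun i hi => ?_) _
    exact condExp_ae_eq_zero_of_lt hεmds (by have := mem_range.mp hi; omega)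
  · rw [integral_sq_sum_mul_of_uncorrelated _ (fun i _ => hεL2 _)
      (fun i _ j _ hij => hεuncorr _ _ (by omega)) _]
    simp_rw [hσ]

/-- For the time-varying AR(2) model with martingale-difference errors, the
`k`-step-ahead forecast error `y_t − E[y_t | 𝔽_{t-k}]` equals
`Σ_{i=0}^{k-1} ξ_{t,i}·ε_{t-i}` a.s., and its variance (mean square error)
equals `Σ_{i=0}^{k-1} ξ_{t,i}²·σ_{t-i}²`. -/
theorem forecast_error_tvar2
    {Ω : Type*} {m : MeasurableSpace Ω} {μ : Measure Ω} [IsProbabilityMeasure μ]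
    (𝔽 : Filtration ℤ m)
    (ε y : ℤ → Ω → ℝ) (φ₀ φ₁ φ₂ : ℤ → ℝ) (σ2 : ℤ → ℝ) (ξ : ℤ → ℤ → ℝ)
    (hξ0 : ∀ t, ξ t 0 = 1) (hξm1 : ∀ t, ξ t (-1) = 0)
    (hξrec : ∀ t i : ℤ, 1 ≤ i → ξ t i = φ₁ t * ξ (t - 1) (i - 1) + φ₂ t * ξ (t - 2) (i - 2))
    (hεL2 : ∀ τ, MemLp (ε τ) 2 μ)
    (hεadapted : ∀ τ, StronglyMeasurable[𝔽 τ] (ε τ))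
    (hεmds : ∀ τ, μ[ε τ | 𝔽 (τ - 1)] =ᵐ[μ] 0)
    (hεmean : ∀ τ, ∫ ω, ε τ ω ∂μ = 0)
    (hεuncorr : ∀ s τ : ℤ, s ≠ τ → ∫ ω, ε s ω * ε τ ω ∂μ = 0)
    (hσ : ∀ τ, σ2 τ = ∫ ω, (ε τ ω) ^ 2 ∂μ)
    (hy : ∀ τ, ∀ ω, y τ ω = φ₀ τ + φ₁ τ * y (τ - 1) ω + φ₂ τ * y (τ - 2) ω + ε τ ω)
    (hyint : ∀ τ, Integrable (y τ) μ)
    (t : ℤ) (k : ℕ) (hk : 1 ≤ k)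
    (hymeas : StronglyMeasurable[𝔽 (t - (k : ℤ))] (y (t - (k : ℤ))))
    (hymeas' : StronglyMeasurable[𝔽 (t - (k : ℤ))] (y (t - (k : ℤ) - 1))) :
    (y t - μ[y t | 𝔽 (t - (k : ℤ))]
        =ᵐ[μ] fun ω => ∑ i ∈ Finset.range k, ξ t i * ε (t - (i : ℤ)) ω) ∧
    ∫ ω, (∑ i ∈ Finset.range k, ξ t i * ε (t - (i : ℤ)) ω) ^ 2 ∂μ
      = ∑ i ∈ Finset.range k, (ξ t i) ^ 2 * σ2 (t - (i : ℤ)) :=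
  forecast_error_tvar2_general 𝔽 ε y φ₀ φ₁ φ₂ σ2 ξ hξ0 hξm1 hξrec hεL2 hεmds hεuncorr hσ hy hyint t
    k hymeas hymeas'
end

section
/- The k-step-ahead optimal predictor is E[y_t | 𝔽_{t-k}] = Σ_{i=0}^{k-1} ξ_{t,i}·φ₀(t-i) + ξ_{t,k}·y_{t-k} + φ₂(t-k+1)·ξ_{t,k-1}·y_{t-k-1}. -/
/-!
Unrolling the AR(2) equation `k` times writes `y t` as the `𝔽 (t - k)`-measurable predictor
plus the noise `∑_{i<k} ξ t i • ε (t - i)`; the coefficients come out as `ξ` because, besides its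
defining recursion in `t`, `ξ` satisfies the dual recursion `xi_succ_eq_bottom` in the lag.
Each `ε (t - i)` with `i < k` has zero conditional mean given `𝔽 (t - i - 1) ⊇ 𝔽 (t - k)`, so by
the tower property the noise has conditional mean zero.
-/

open MeasureTheory Filter Finset

theorem xi_succ_eq_bottom {φ₁ φ₂ : ℤ → ℝ} {ξ : ℤ → ℤ → ℝ}
    (hξ0 : ∀ t, ξ t 0 = 1) (hξm1 : ∀ t, ξ t (-1) = 0)
    (hξrec : ∀ t i : ℤ, 1 ≤ i → ξ t i = φ₁ t * ξ (t - 1) (i - 1) + φ₂ t * ξ (t - 2) (i - 2))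
    (n : ℕ) (t : ℤ) :
    ξ t (n + 1) = φ₁ (t - n) * ξ t n + φ₂ (t - n + 1) * ξ t (n - 1) := by
  induction n using Nat.twoStepInduction generalizing t with
  | zero => simpa [hξ0, hξm1] using hξrec t 1 le_rfl
  | one =>
    have h₂ := hξrec t 2 (by norm_num)
    have h₁ := hξrec t 1 le_rfl
    have h₁' := hξrec (t - 1) 1 le_rfl
    norm_num [hξ0, hξm1] at h₂ h₁ h₁' ⊢
    rw [h₂, h₁, h₁']
    ring
  | more n ih₀ ih₁ =>
    have h₂ := hξrec t (n + 3) (by omega)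
    have h₁ := hξrec t (n + 2) (by omega)
    have h₀ := hξrec t (n + 1) (by omega)
    push_cast at *
    linear_combination (norm := ring_nf) h₂ + φ₁ t * ih₁ (t - 1) + φ₂ t * ih₀ (t - 2)
        - φ₁ (t - (n + 2)) * h₁ - φ₂ (t - (n + 1)) * h₀

theorem eq_sum_xi_mul_add {φ₁ φ₂ u x : ℤ → ℝ} {ξ : ℤ → ℤ → ℝ}
    (hξ0 : ∀ t, ξ t 0 = 1) (hξm1 : ∀ t, ξ t (-1) = 0)
    (hξrec : ∀ t i : ℤ, 1 ≤ i → ξ t i = φ₁ t * ξ (t - 1) (i - 1) + φ₂ t * ξ (t - 2) (i - 2))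
    (hx : ∀ τ, x τ = u τ + φ₁ τ * x (τ - 1) + φ₂ τ * x (τ - 2)) (t : ℤ) (k : ℕ) :
    x t = ∑ i ∈ range k, ξ t i * u (t - i) + ξ t k * x (t - k)
      + φ₂ (t - k + 1) * ξ t (k - 1) * x (t - k - 1) := by
  induction k with
  | zero => simp [hξ0, hξm1]
  | succ k ih =>
    rw [ih, hx (t - k), sum_range_succ]
    push_cast
    linear_combination (norm := ring_nf) -x (t - k - 1) * xi_succ_eq_bottom hξ0 hξm1 hξrec k t

section CondExp

variable {Ω E : Type*} [NormedAddCommGroup E] [NormedSpace ℝ E] [CompleteSpace E]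
  {m₀ : MeasurableSpace Ω} {μ : Measure Ω}

theorem MeasureTheory.Filtration.condExp_eq_zero_of_le {ι : Type*} [Preorder ι]
    (𝔽 : Filtration ι m₀) {f : Ω → E} {i j : ι} (hij : i ≤ j) [SigmaFinite (μ.trim (𝔽.le j))]
    (hf : μ[f | 𝔽 j] =ᵐ[μ] 0) : μ[f | 𝔽 i] =ᵐ[μ] 0 :=
  (𝔽.condExp_condExp f hij).symm.trans <| (condExp_congr_ae hf).trans <| by rw [condExp_zero]

theorem condExp_finsetSum_smul_eq_zero {ι : Type*} {s : Finset ι} (c : ι → ℝ) {f : ι → Ω → E}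
    (hint : ∀ i ∈ s, Integrable (f i) μ) {m : MeasurableSpace Ω}
    (hf : ∀ i ∈ s, μ[f i | m] =ᵐ[μ] 0) : μ[∑ i ∈ s, c i • f i | m] =ᵐ[μ] 0 := by
  refine (condExp_finsetSum (fun i hi => (hint i hi).smul (c i)) m).trans ?_
  rw [← sum_const_zero (s := s)]
  refine eventuallyEq_sum fun i hi => (condExp_smul (c i) (f i) m).trans ?_
  filter_upwards [hf i hi] with ω hω
  simp [hω]

end CondExp

theorem optimal_predictor_tvar2_general
    {Ω : Type*} {m : MeasurableSpace Ω} {μ : Measure Ω} [IsProbabilityMeasure μ]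
    (𝔽 : Filtration ℤ m)
    (ε y : ℤ → Ω → ℝ) (φ₀ φ₁ φ₂ : ℤ → ℝ) (ξ : ℤ → ℤ → ℝ)
    (hξ0 : ∀ t, ξ t 0 = 1) (hξm1 : ∀ t, ξ t (-1) = 0)
    (hξrec : ∀ t i : ℤ, 1 ≤ i → ξ t i = φ₁ t * ξ (t - 1) (i - 1) + φ₂ t * ξ (t - 2) (i - 2))
    (hεint : ∀ τ, Integrable (ε τ) μ)
    (hεmds : ∀ τ, μ[ε τ | 𝔽 (τ - 1)] =ᵐ[μ] 0)
    (hy : ∀ τ, ∀ ω, y τ ω = φ₀ τ + φ₁ τ * y (τ - 1) ω + φ₂ τ * y (τ - 2) ω + ε τ ω)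
    (hyint : ∀ τ, Integrable (y τ) μ)
    (t : ℤ) (k : ℕ)
    (hymeas : StronglyMeasurable[𝔽 (t - (k : ℤ))] (y (t - (k : ℤ))))
    (hymeas' : StronglyMeasurable[𝔽 (t - (k : ℤ))] (y (t - (k : ℤ) - 1))) :
    μ[y t | 𝔽 (t - (k : ℤ))]
      =ᵐ[μ] fun ω =>
        (∑ i ∈ Finset.range k, ξ t i * φ₀ (t - (i : ℤ)))
          + ξ t k * y (t - (k : ℤ)) ω
          + φ₂ (t - (k : ℤ) + 1) * ξ t ((k : ℤ) - 1) * y (t - (k : ℤ) - 1) ω := by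
  let predictor : Ω → ℝ := fun ω =>
    (∑ i ∈ Finset.range k, ξ t i * φ₀ (t - (i : ℤ)))
      + ξ t k * y (t - (k : ℤ)) ω
      + φ₂ (t - (k : ℤ) + 1) * ξ t ((k : ℤ) - 1) * y (t - (k : ℤ) - 1) ω
  let noise : Ω → ℝ := ∑ i ∈ range k, ξ t i • ε (t - i)
  have hsplit : y t = predictor + noise := by
    funext ω
    rw [eq_sum_xi_mul_add (x := (y · ω)) (u := fun τ => φ₀ τ + ε τ ω) hξ0 hξm1 hξrec
      (fun τ => by rw [hy τ ω]; ring) t k]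
    simp only [predictor, noise, Pi.add_apply, Finset.sum_apply, Pi.smul_apply, smul_eq_mul,
      mul_add, sum_add_distrib]
    ring
  have hpredictor_int : Integrable predictor μ :=
    ((integrable_const _).add ((hyint _).const_mul _)).add ((hyint _).const_mul _)
  have hnoise_int : Integrable noise μ := integrable_finsetSum' _ fun i _ => (hεint _).smul _
  have hpredictor : μ[predictor | 𝔽 (t - k)] = predictor :=
    condExp_of_stronglyMeasurable (𝔽.le _)
      ((stronglyMeasurable_const.add (hymeas.const_mul _)).add (hymeas'.const_mul _))
      hpredictor_int
  have hnoise : μ[noise | 𝔽 (t - k)] =ᵐ[μ] 0 :=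
    condExp_finsetSum_smul_eq_zero _ (fun i _ => hεint _) fun i hi =>
      𝔽.condExp_eq_zero_of_le (by have := mem_range.mp hi; omega) (hεmds _)
  calc μ[y t | 𝔽 (t - k)] = μ[predictor + noise | 𝔽 (t - k)] := by rw [hsplit]
    _ =ᵐ[μ] μ[predictor | 𝔽 (t - k)] + μ[noise | 𝔽 (t - k)] :=
      condExp_add hpredictor_int hnoise_int _
    _ =ᵐ[μ] predictor + 0 := by rw [hpredictor]; exact EventuallyEq.rfl.add hnoise
    _ = predictor := add_zero _

/-- The `k`-step-ahead optimal predictor of the time-varying AR(2):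
`E[y_t | 𝔽_{t-k}] = Σ_{i=0}^{k-1} ξ_{t,i}·φ₀(t-i) + ξ_{t,k}·y_{t-k}
  + φ₂(t-k+1)·ξ_{t,k-1}·y_{t-k-1}` a.s. -/
theorem optimal_predictor_tvar2
    {Ω : Type*} {m : MeasurableSpace Ω} {μ : Measure Ω} [IsProbabilityMeasure μ]
    (𝔽 : Filtration ℤ m)
    (ε y : ℤ → Ω → ℝ) (φ₀ φ₁ φ₂ : ℤ → ℝ) (ξ : ℤ → ℤ → ℝ)
    (hξ0 : ∀ t, ξ t 0 = 1) (hξm1 : ∀ t, ξ t (-1) = 0)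
    (hξrec : ∀ t i : ℤ, 1 ≤ i → ξ t i = φ₁ t * ξ (t - 1) (i - 1) + φ₂ t * ξ (t - 2) (i - 2))
    (hεint : ∀ τ, Integrable (ε τ) μ)
    (hεadapted : ∀ τ, StronglyMeasurable[𝔽 τ] (ε τ))
    (hεmds : ∀ τ, μ[ε τ | 𝔽 (τ - 1)] =ᵐ[μ] 0)
    (hy : ∀ τ, ∀ ω, y τ ω = φ₀ τ + φ₁ τ * y (τ - 1) ω + φ₂ τ * y (τ - 2) ω + ε τ ω)
    (hyint : ∀ τ, Integrable (y τ) μ)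
    (t : ℤ) (k : ℕ) (hk : 1 ≤ k)
    (hymeas : StronglyMeasurable[𝔽 (t - (k : ℤ))] (y (t - (k : ℤ))))
    (hymeas' : StronglyMeasurable[𝔽 (t - (k : ℤ))] (y (t - (k : ℤ) - 1))) :
    μ[y t | 𝔽 (t - (k : ℤ))]
      =ᵐ[μ] fun ω =>
        (∑ i ∈ Finset.range k, ξ t i * φ₀ (t - (i : ℤ)))
          + ξ t k * y (t - (k : ℤ)) ω
          + φ₂ (t - (k : ℤ) + 1) * ξ t ((k : ℤ) - 1) * y (t - (k : ℤ) - 1) ω :=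
  optimal_predictor_tvar2_general 𝔽 ε y φ₀ φ₁ φ₂ ξ hξ0 hξm1 hξrec hεint hεmds hy hyint t k hymeas
    hymeas'
end

section
/- For an l-periodic AR(2), the determinant over n+1 periods satisfies the recursion ξ_{t,(n+1)l} = ξ_{t,nl}·ξ_{t,l} + φ₂(t-nl+1)·ξ_{t,nl-1}·ξ_{t-1,l-1}. -/
/-!
`ξ t k` is the continuant (tridiagonal determinant) of length `k` ending at time `t`. Expanding
the continuant of length `k + m` along the boundary between its last `k` and first `m` rows
splits it into continuants of lengths `k`, `m` and `k - 1`, `m - 1`. With `k = n l` and `m = l`,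
the two factors starting at time `t - n l` are brought back to time `t` by periodicity, which
passes from `φ₁, φ₂` to `ξ` through the recurrence.
-/

open Function

structure IsContinuant (φ₁ φ₂ : ℤ → ℝ) (ξ : ℤ → ℤ → ℝ) : Prop where
  zero : ∀ t, ξ t 0 = 1
  neg_one : ∀ t, ξ t (-1) = 0
  recurrence : ∀ t i : ℤ, 1 ≤ i → ξ t i = φ₁ t * ξ (t - 1) (i - 1) + φ₂ t * ξ (t - 2) (i - 2)

namespace IsContinuant

variable {φ₁ φ₂ : ℤ → ℝ} {ξ : ℤ → ℤ → ℝ}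

lemma one (h : IsContinuant φ₁ φ₂ ξ) (t : ℤ) : ξ t 1 = φ₁ t := by
  have := h.recurrence t 1 le_rfl
  norm_num [h.zero, h.neg_one] at this
  exact this

lemma add (h : IsContinuant φ₁ φ₂ ξ) {k m : ℤ} (hk : 0 ≤ k) (hm : 0 ≤ m) (t : ℤ) :
    ξ t (k + m) = ξ t k * ξ (t - k) m
      + φ₂ (t - k + 1) * ξ t (k - 1) * ξ (t - k - 1) (m - 1) := by
  obtain ⟨k, rfl⟩ := Int.eq_ofNat_of_zero_le hk
  clear hk
  induction k using Nat.twoStepInduction generalizing t with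
  | zero => simp [h.zero, h.neg_one]
  | one =>
    have hrec := h.recurrence t (1 + m) (by omega)
    rw [show (1 + m - 1) = m by ring, show 1 + m - 2 = m - 1 by ring] at hrec
    simp only [Nat.cast_one, sub_self, h.zero, h.one, hrec, sub_add_cancel]
    ring_nf
  | more k ih₀ ih₁ =>
    have hrec := h.recurrence t (k + 2 + m) (by omega)
    have hk₂ := h.recurrence t (k + 2) (by omega)
    have hk₁ := h.recurrence t (k + 1) (by omega)
    specialize ih₀ (t - 2)
    specialize ih₁ (t - 1)
    push_cast at ih₀ ih₁ ⊢
    rw [show (k : ℤ) + 2 + m - 1 = k + 1 + m by ring, show (k : ℤ) + 2 + m - 2 = k + m by ring,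
      ih₀, ih₁] at hrec
    rw [hrec, hk₂, show (k : ℤ) + 2 - 1 = k + 1 by ring, hk₁]
    ring_nf

lemma periodic (h : IsContinuant φ₁ φ₂ ξ) {p : ℤ} (hφ₁ : Periodic φ₁ p) (hφ₂ : Periodic φ₂ p)
    {i : ℤ} (hi : -1 ≤ i) : Periodic (ξ · i) p := by
  suffices key : ∀ t, ξ (t + p) i = ξ t i ∧ ξ (t + p) (i + 1) = ξ t (i + 1) from
    fun t => (key t).1
  induction i, hi using Int.leInduction with
  | base => simp [h.zero, h.neg_one]
  | succ i hi ih =>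
    intro t
    refine ⟨(ih t).2, ?_⟩
    rw [h.recurrence _ (i + 1 + 1) (by omega), h.recurrence t (i + 1 + 1) (by omega),
      show t + p - 1 = t - 1 + p by ring, show t + p - 2 = t - 2 + p by ring,
      show i + 1 + 1 - 1 = i + 1 by ring, show i + 1 + 1 - 2 = i by ring,
      (ih (t - 1)).2, (ih (t - 2)).1, hφ₁, hφ₂]

end IsContinuant

theorem periodic_xi_recursion_general (φ₁ φ₂ : ℤ → ℝ) (ξ : ℤ → ℤ → ℝ) (l : ℕ)
    (hper1 : ∀ s : ℤ, φ₁ (s + (l : ℤ)) = φ₁ s)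
    (hper2 : ∀ s : ℤ, φ₂ (s + (l : ℤ)) = φ₂ s)
    (hξ0 : ∀ t, ξ t 0 = 1) (hξm1 : ∀ t, ξ t (-1) = 0)
    (hξrec : ∀ t i : ℤ, 1 ≤ i →
      ξ t i = φ₁ t * ξ (t - 1) (i - 1) + φ₂ t * ξ (t - 2) (i - 2))
    (t : ℤ) (n : ℕ) :
    ξ t (((n : ℤ) + 1) * l) =
      ξ t ((n : ℤ) * l) * ξ t l
        + φ₂ (t - (n : ℤ) * l + 1) * ξ t ((n : ℤ) * l - 1) * ξ (t - 1) ((l : ℤ) - 1) := by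
  have h : IsContinuant φ₁ φ₂ ξ := ⟨hξ0, hξm1, hξrec⟩
  have hl : Periodic (ξ · l) l := h.periodic hper1 hper2 (by omega)
  have hl' : Periodic (ξ · (l - 1)) l := h.periodic hper1 hper2 (by omega)
  calc ξ t (((n : ℤ) + 1) * l) = ξ t (n * l + l) := by ring_nf
    _ = ξ t (n * l) * ξ (t - n * l) l
          + φ₂ (t - n * l + 1) * ξ t (n * l - 1) * ξ ((t - 1) - n * l) (l - 1) := by
      rw [h.add (by positivity) (by positivity), sub_right_comm]
    _ = _ := by rw [hl.sub_nat_mul_eq, hl'.sub_nat_mul_eq]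

/-- Eq. (B.5) of the paper: for an `l`-periodic AR(2), the Green-function
determinants over `n+1` periods satisfy
`ξ_{t,(n+1)l} = ξ_{t,nl}·ξ_{t,l} + φ₂(t-nl+1)·ξ_{t,nl-1}·ξ_{t-1,l-1}`. -/
theorem periodic_xi_recursion (φ₁ φ₂ : ℤ → ℝ) (ξ : ℤ → ℤ → ℝ) (l : ℕ) (hl : 1 ≤ l)
    (hper1 : ∀ s : ℤ, φ₁ (s + (l : ℤ)) = φ₁ s)
    (hper2 : ∀ s : ℤ, φ₂ (s + (l : ℤ)) = φ₂ s)
    (hξ0 : ∀ t, ξ t 0 = 1) (hξm1 : ∀ t, ξ t (-1) = 0)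
    (hξrec : ∀ t i : ℤ, 1 ≤ i →
      ξ t i = φ₁ t * ξ (t - 1) (i - 1) + φ₂ t * ξ (t - 2) (i - 2))
    (t : ℤ) (n : ℕ) :
    ξ t (((n : ℤ) + 1) * l) =
      ξ t ((n : ℤ) * l) * ξ t l
        + φ₂ (t - (n : ℤ) * l + 1) * ξ t ((n : ℤ) * l - 1) * ξ (t - 1) ((l : ℤ) - 1) :=
  periodic_xi_recursion_general φ₁ φ₂ ξ l hper1 hper2 hξ0 hξm1 hξrec t n
end

section
/- Let (y_{t,k}^{par}) be defined by y_{t,k}^{par} = Σ_{i=0}^{k-1} ξ_{t,i}(φ₀(t-i) + ε_{t-i}). If Σ_{i=0}^{∞} ξ_{t,i}φ₀(t-i) converges and Σ_{i=0}^{∞} sup_t(ξ_{t,i}²σ_{t-i}²) < ∞, then y_{t,k}^{par} converges in L² as k → ∞, and the limit y_t = Σ_{i=0}^{∞} ξ_{t,i}(φ₀(t-i) + ε_{t-i}) satisfies the equation y_t = φ₀(t) + φ₁(t)y_{t-1} + φ₂(t)y_{t-2} + ε_t almost surely. -/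
open MeasureTheory Filter Finset
open scoped RealInnerProductSpace

/-!
The series is handled in `L²`. Its noise part `∑ ξ_{t,i} ε_{t-i}` is a series of pairwise
orthogonal vectors whose squared norms `ξ_{t,i}² σ_{t-i}²` are summable, so it converges by
Pythagoras and completeness; the deterministic part converges by assumption. The recursion for
`ξ` turns the partial sums into an exact AR(2) identity
`y_{t,k+2} = φ₀(t) + ε_t + φ₁(t) y_{t-1,k+1} + φ₂(t) y_{t-2,k}`, which passes to the limit.
-/

section Orthogonal

variable {ι E : Type*} [NormedAddCommGroup E] [InnerProductSpace ℝ E] {v : ι → E}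

theorem norm_sum_sq_eq_sum_norm_sq_of_pairwise_inner_eq_zero
    (h : Pairwise fun i j => ⟪v i, v j⟫ = 0) (s : Finset ι) :
    ‖∑ i ∈ s, v i‖ ^ 2 = ∑ i ∈ s, ‖v i‖ ^ 2 := by
  classical
  rw [← real_inner_self_eq_norm_sq, sum_inner]
  refine sum_congr rfl fun i hi => ?_
  rw [inner_sum, sum_eq_single i (fun j _ hji => h hji.symm) (absurd hi),
    real_inner_self_eq_norm_sq]

theorem summable_of_pairwise_inner_eq_zero [CompleteSpace E]
    (h : Pairwise fun i j => ⟪v i, v j⟫ = 0) (hv : Summable fun i => ‖v i‖ ^ 2) :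
    Summable v := by
  rw [summable_iff_vanishing_norm]
  intro r hr
  obtain ⟨s, hs⟩ := summable_iff_vanishing_norm.1 hv (r ^ 2) (by positivity)
  refine ⟨s, fun u hu => ?_⟩
  have hsq := hs u hu
  rw [← norm_sum_sq_eq_sum_norm_sq_of_pairwise_inner_eq_zero h, norm_pow, norm_norm] at hsq
  exact (pow_lt_pow_iff_left₀ (norm_nonneg _) hr.le two_ne_zero).1 hsq

end Orthogonal

theorem sum_range_add_two_smul_eq_of_recursion {R M : Type*} [CommRing R] [AddCommGroup M]
    [Module R M] {ξ : ℤ → ℤ → R} {φ₁ φ₂ : ℤ → R}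
    (hξ0 : ∀ t, ξ t 0 = 1) (hξm1 : ∀ t, ξ t (-1) = 0)
    (hξrec : ∀ t i : ℤ, 1 ≤ i →
      ξ t i = φ₁ t * ξ (t - 1) (i - 1) + φ₂ t * ξ (t - 2) (i - 2))
    (X : ℤ → M) (t : ℤ) (k : ℕ) :
    ∑ i ∈ range (k + 2), ξ t i • X (t - i) =
      X t + φ₁ t • ∑ i ∈ range (k + 1), ξ (t - 1) i • X (t - 1 - i)
        + φ₂ t • ∑ i ∈ range k, ξ (t - 2) i • X (t - 2 - i) := by
  have hstep : ∀ i : ℕ, ξ t (i + 1 : ℕ) • X (t - (i + 1 : ℕ)) =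
      φ₁ t • (ξ (t - 1) i • X (t - 1 - i)) + φ₂ t • (ξ (t - 2) (i - 1) • X (t - 2 - (i - 1))) := by
    intro i
    rw [hξrec t _ (by omega), add_smul, mul_smul, mul_smul]
    congr 4 <;> push_cast <;> ring
  have hshift : ∑ i ∈ range (k + 1), ξ (t - 2) ((i : ℤ) - 1) • X (t - 2 - ((i : ℤ) - 1)) =
      ∑ i ∈ range k, ξ (t - 2) i • X (t - 2 - i) := by
    rw [sum_range_succ']
    simp [hξm1]
  rw [sum_range_succ', Nat.cast_zero, hξ0, sub_zero, one_smul, sum_congr rfl fun i _ => hstep i,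
    sum_add_distrib, ← smul_sum, ← smul_sum, hshift]
  abel

namespace MeasureTheory

variable {Ω : Type*} {m : MeasurableSpace Ω} {μ : Measure Ω}

theorem Lp.coeFn_sum_ae_eq {ι E : Type*} [NormedAddCommGroup E] {p : ENNReal}
    {F : ι → Lp E p μ} {f : ι → Ω → E} (s : Finset ι) (h : ∀ i ∈ s, F i =ᵐ[μ] f i) :
    ⇑(∑ i ∈ s, F i) =ᵐ[μ] fun ω => ∑ i ∈ s, f i ω := by
  classical
  induction s using Finset.induction_on with
  | empty => exact Lp.coeFn_zero E p μ
  | insert j s hj ih =>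
    simp only [sum_insert hj]
    filter_upwards [Lp.coeFn_add (F j) (∑ i ∈ s, F i), h j (mem_insert_self j s),
      ih fun i hi => h i (mem_insert_of_mem hi)] with ω hadd hj hs
    rw [hadd, Pi.add_apply, hj, hs]

theorem L2.inner_toLp_eq_integral_mul {f g : Ω → ℝ} (hf : MemLp f 2 μ) (hg : MemLp g 2 μ) :
    ⟪hf.toLp f, hg.toLp g⟫ = ∫ ω, f ω * g ω ∂μ := by
  rw [L2.inner_def]
  refine integral_congr_ae ?_
  filter_upwards [hf.coeFn_toLp, hg.coeFn_toLp] with ω hfω hgω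
  rw [hfω, hgω, real_inner_eq_re_inner, RCLike.inner_apply, mul_comm]
  rfl

theorem summable_smul_toLp_of_uncorrelated {ε : ℤ → Ω → ℝ} (hεL2 : ∀ τ, MemLp (ε τ) 2 μ)
    (hεuncorr : ∀ s τ : ℤ, s ≠ τ → ∫ ω, ε s ω * ε τ ω ∂μ = 0)
    {κ : ℕ → ℤ} (hκ : Function.Injective κ) {c : ℕ → ℝ}
    (hc : Summable fun i => c i ^ 2 * ∫ ω, ε (κ i) ω ^ 2 ∂μ) :
    Summable fun i => c i • (hεL2 (κ i)).toLp (ε (κ i)) := by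
  refine summable_of_pairwise_inner_eq_zero (fun i j hij => ?_) (hc.congr fun i => ?_)
  · change ⟪_, _⟫ = 0
    rw [real_inner_smul_left, real_inner_smul_right, L2.inner_toLp_eq_integral_mul,
      hεuncorr _ _ (hκ.ne hij), mul_zero, mul_zero]
  · rw [norm_smul, mul_pow, Real.norm_eq_abs, sq_abs, ← real_inner_self_eq_norm_sq (F := Lp ℝ 2 μ),
      L2.inner_toLp_eq_integral_mul]
    simp only [sq]

variable [IsFiniteMeasure μ]

noncomputable def innovationLp (φ₀ : ℤ → ℝ) {ε : ℤ → Ω → ℝ} (hεL2 : ∀ τ, MemLp (ε τ) 2 μ)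
    (τ : ℤ) : Lp ℝ 2 μ :=
  Lp.const 2 μ (φ₀ τ) + (hεL2 τ).toLp (ε τ)

theorem coeFn_innovationLp (φ₀ : ℤ → ℝ) {ε : ℤ → Ω → ℝ} (hεL2 : ∀ τ, MemLp (ε τ) 2 μ) (τ : ℤ) :
    innovationLp φ₀ hεL2 τ =ᵐ[μ] fun ω => φ₀ τ + ε τ ω := by
  filter_upwards [Lp.coeFn_add (Lp.const 2 μ (φ₀ τ)) ((hεL2 τ).toLp (ε τ)),
    Lp.coeFn_const 2 μ (φ₀ τ), (hεL2 τ).coeFn_toLp] with ω hadd hconst hε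
  rw [innovationLp, hadd, Pi.add_apply, hconst, hε, Function.const_apply]

theorem exists_tendsto_sum_range_smul_innovationLp {φ₀ : ℤ → ℝ} {ε : ℤ → Ω → ℝ}
    (hεL2 : ∀ τ, MemLp (ε τ) 2 μ) (hεuncorr : ∀ s τ : ℤ, s ≠ τ → ∫ ω, ε s ω * ε τ ω ∂μ = 0)
    {κ : ℕ → ℤ} (hκ : Function.Injective κ) {c : ℕ → ℝ}
    (hdrift : ∃ S : ℝ, Tendsto (fun k => ∑ i ∈ range k, c i * φ₀ (κ i)) atTop (nhds S))
    (hc : Summable fun i => c i ^ 2 * ∫ ω, ε (κ i) ω ^ 2 ∂μ) :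
    ∃ Y : Lp ℝ 2 μ,
      Tendsto (fun k => ∑ i ∈ range k, c i • innovationLp φ₀ hεL2 (κ i)) atTop (nhds Y) := by
  obtain ⟨S, hS⟩ := hdrift
  have hsplit : ∀ k, ∑ i ∈ range k, c i • innovationLp φ₀ hεL2 (κ i) =
      Lp.constL 2 μ ℝ (∑ i ∈ range k, c i * φ₀ (κ i)) +
        ∑ i ∈ range k, c i • (hεL2 (κ i)).toLp (ε (κ i)) := fun k => by
    simp only [innovationLp, smul_add, sum_add_distrib, map_sum]
    rfl
  exact ⟨_, (((Lp.constL 2 μ ℝ).continuous.tendsto S).comp hS).add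
    (summable_smul_toLp_of_uncorrelated hεL2 hεuncorr hκ hc).hasSum.tendsto_sum_nat
    |>.congr fun k => (hsplit k).symm⟩

end MeasureTheory

theorem wold_representation_tvar2_general
    {Ω : Type*} {m : MeasurableSpace Ω} {μ : Measure Ω} [IsProbabilityMeasure μ]
    (ε : ℤ → Ω → ℝ) (φ₀ φ₁ φ₂ : ℤ → ℝ) (σ2 : ℤ → ℝ) (ξ : ℤ → ℤ → ℝ)
    (hξ0 : ∀ t, ξ t 0 = 1) (hξm1 : ∀ t, ξ t (-1) = 0)
    (hξrec : ∀ t i : ℤ, 1 ≤ i →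
      ξ t i = φ₁ t * ξ (t - 1) (i - 1) + φ₂ t * ξ (t - 2) (i - 2))
    (hεL2 : ∀ τ, MemLp (ε τ) 2 μ)
    (hεuncorr : ∀ s τ : ℤ, s ≠ τ → ∫ ω, ε s ω * ε τ ω ∂μ = 0)
    (hσ : ∀ τ, σ2 τ = ∫ ω, (ε τ ω) ^ 2 ∂μ)
    (hdrift : ∀ t : ℤ, ∃ S : ℝ,
      Tendsto (fun k : ℕ => ∑ i ∈ Finset.range k, ξ t i * φ₀ (t - (i : ℤ)))
        atTop (nhds S))
    (hdom : ∃ g : ℕ → ℝ, Summable g ∧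
      ∀ (t : ℤ) (i : ℕ), (ξ t i) ^ 2 * σ2 (t - (i : ℤ)) ≤ g i) :
    ∃ y : ℤ → Ω → ℝ,
      (∀ t, MemLp (y t) 2 μ) ∧
      (∀ t, Tendsto
        (fun k : ℕ => eLpNorm
          (y t - fun ω => ∑ i ∈ Finset.range k,
            ξ t i * (φ₀ (t - (i : ℤ)) + ε (t - (i : ℤ)) ω)) 2 μ)
        atTop (nhds 0)) ∧
      (∀ t, ∀ᵐ ω ∂μ,
        y t ω = φ₀ t + φ₁ t * y (t - 1) ω + φ₂ t * y (t - 2) ω + ε t ω) := by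
  obtain ⟨g, hg, hgdom⟩ := hdom
  set X := innovationLp (μ := μ) φ₀ hεL2
  have hsummable : ∀ t, Summable fun i : ℕ => ξ t i ^ 2 * ∫ ω, ε (t - i) ω ^ 2 ∂μ := fun t =>
    hg.of_nonneg_of_le (fun i => mul_nonneg (sq_nonneg _) (integral_nonneg fun ω => sq_nonneg _))
      fun i => hσ (t - i) ▸ hgdom t i
  choose Y hY using fun t => exists_tendsto_sum_range_smul_innovationLp hεL2 hεuncorr
    ((sub_right_injective (b := t)).comp Nat.cast_injective) (hdrift t) (hsummable t)
  have hcoe : ∀ t k, ⇑(∑ i ∈ range k, ξ t i • X (t - i)) =ᵐ[μ]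
      fun ω => ∑ i ∈ range k, ξ t i * (φ₀ (t - i) + ε (t - i) ω) := fun t k =>
    Lp.coeFn_sum_ae_eq _ fun i _ =>
      (Lp.coeFn_smul _ _).trans ((coeFn_innovationLp φ₀ hεL2 _).const_smul (ξ t i))
  refine ⟨fun t => Y t, fun t => Lp.memLp _, fun t => ?_, fun t => ?_⟩
  · refine ((Lp.tendsto_Lp_iff_tendsto_eLpNorm' _ _).1 (hY t)).congr fun k => ?_
    rw [eLpNorm_sub_comm]
    exact eLpNorm_congr_ae (EventuallyEq.rfl.sub (hcoe t k))
  have hrec : Y t = X t + φ₁ t • Y (t - 1) + φ₂ t • Y (t - 2) := by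
    refine tendsto_nhds_unique ((hY t).comp (tendsto_add_atTop_nat 2)) ?_
    simp only [Function.comp_def, sum_range_add_two_smul_eq_of_recursion hξ0 hξm1 hξrec]
    exact ((tendsto_const_nhds.add (((hY (t - 1)).comp (tendsto_add_atTop_nat 1)).const_smul _)).add
      ((hY (t - 2)).const_smul _))
  filter_upwards [Lp.coeFn_add (X t + φ₁ t • Y (t - 1)) (φ₂ t • Y (t - 2)),
    Lp.coeFn_add (X t) (φ₁ t • Y (t - 1)), Lp.coeFn_smul (φ₁ t) (Y (t - 1)),
    Lp.coeFn_smul (φ₂ t) (Y (t - 2)), coeFn_innovationLp φ₀ hεL2 t] with ω h₁ h₂ h₃ h₄ hX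
  rw [hrec, h₁, Pi.add_apply, h₂, Pi.add_apply, h₃, h₄, hX]
  simp only [Pi.smul_apply, smul_eq_mul]
  ring

/-- Under Assumption A.1 (convergence of `Σ ξ_{t,i}φ₀(t-i)` and summability of
`sup_t ξ_{t,i}²σ_{t-i}²`), the partial sums
`y_{t,k}^{par} = Σ_{i<k} ξ_{t,i}(φ₀(t-i) + ε_{t-i})` converge in `L²` as
`k → ∞`, and the limit satisfies the time-varying AR(2) equation a.s. -/
theorem wold_representation_tvar2
    {Ω : Type*} {m : MeasurableSpace Ω} {μ : Measure Ω} [IsProbabilityMeasure μ]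
    (ε : ℤ → Ω → ℝ) (φ₀ φ₁ φ₂ : ℤ → ℝ) (σ2 : ℤ → ℝ) (ξ : ℤ → ℤ → ℝ)
    (hξ0 : ∀ t, ξ t 0 = 1) (hξm1 : ∀ t, ξ t (-1) = 0)
    (hξrec : ∀ t i : ℤ, 1 ≤ i →
      ξ t i = φ₁ t * ξ (t - 1) (i - 1) + φ₂ t * ξ (t - 2) (i - 2))
    (hεL2 : ∀ τ, MemLp (ε τ) 2 μ)
    (hεmean : ∀ τ, ∫ ω, ε τ ω ∂μ = 0)
    (hεuncorr : ∀ s τ : ℤ, s ≠ τ → ∫ ω, ε s ω * ε τ ω ∂μ = 0)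
    (hσ : ∀ τ, σ2 τ = ∫ ω, (ε τ ω) ^ 2 ∂μ)
    (hσbdd : ∃ Ml M : ℝ, 0 < Ml ∧ ∀ τ, Ml ≤ σ2 τ ∧ σ2 τ ≤ M)
    (hdrift : ∀ t : ℤ, ∃ S : ℝ,
      Tendsto (fun k : ℕ => ∑ i ∈ Finset.range k, ξ t i * φ₀ (t - (i : ℤ)))
        atTop (nhds S))
    (hdom : ∃ g : ℕ → ℝ, Summable g ∧
      ∀ (t : ℤ) (i : ℕ), (ξ t i) ^ 2 * σ2 (t - (i : ℤ)) ≤ g i) :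
    ∃ y : ℤ → Ω → ℝ,
      (∀ t, MemLp (y t) 2 μ) ∧
      (∀ t, Tendsto
        (fun k : ℕ => eLpNorm
          (y t - fun ω => ∑ i ∈ Finset.range k,
            ξ t i * (φ₀ (t - (i : ℤ)) + ε (t - (i : ℤ)) ω)) 2 μ)
        atTop (nhds 0)) ∧
      (∀ t, ∀ᵐ ω ∂μ,
        y t ω = φ₀ t + φ₁ t * y (t - 1) ω + φ₂ t * y (t - 2) ω + ε t ω) :=
  wold_representation_tvar2_general (m := m) ε φ₀ φ₁ φ₂ σ2 ξ hξ0 hξm1 hξrec hεL2 hεuncorr hσ hdrift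
    hdom
end

section
/- Under Assumption A.1, the autocovariance satisfies the Green-function recursion γ_{t,k} = ξ_{t,k}·Var(y_{t-k}) + φ₂(t-k+1)·ξ_{t,k-1}·Cov(y_{t-k}, y_{t-k-1}) for all k ≥ 1. -/
/-!
Unrolling the AR(2) recursion `k` steps splits the Green coefficients as
`ξ_{t,k+j} = ξ_{t,k} ξ_{t-k,j} + φ₂(t-k+1) ξ_{t,k-1} ξ_{t-k-1,j-1}`. Applied to the MA(∞) partial
sums and passed to the L² limit, this gives almost surely
`y_t = Σ_{i<k} ξ_{t,i} (φ₀(t-i) + ε_{t-i}) + ξ_{t,k} y_{t-k} + φ₂(t-k+1) ξ_{t,k-1} y_{t-k-1}`.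
Each `ε_{t-i}` with `i < k` is uncorrelated with `y_{t-k}`, an L² limit of combinations of earlier
innovations, so the covariance of this identity with `y_{t-k}` is the claimed recursion.
-/

open MeasureTheory Filter Finset ProbabilityTheory
open scoped InnerProductSpace Topology

section L2

variable {Ω : Type*} {m : MeasurableSpace Ω} {μ : Measure Ω}

lemma covariance_congr_left {X X' Y : Ω → ℝ} (h : X =ᵐ[μ] X') :
    cov[X, Y; μ] = cov[X', Y; μ] := by
  unfold covariance
  rw [integral_congr_ae h]
  refine integral_congr_ae ?_
  filter_upwards [h] with ω hω
  rw [hω]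

lemma integral_mul_eq_inner_toLp {X Y : Ω → ℝ} (hX : MemLp X 2 μ) (hY : MemLp Y 2 μ) :
    ∫ ω, X ω * Y ω ∂μ = ⟪hX.toLp X, hY.toLp Y⟫_ℝ := by
  rw [L2.inner_def]
  refine integral_congr_ae ?_
  filter_upwards [hX.coeFn_toLp, hY.coeFn_toLp] with ω hXω hYω
  simp [hXω, hYω, mul_comm]

lemma tendsto_covariance_right [IsProbabilityMeasure μ] {X f : Ω → ℝ} {F : ℕ → Ω → ℝ}
    (hX : MemLp X 2 μ) (hf : MemLp f 2 μ) (hF : ∀ K, MemLp (F K) 2 μ)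
    (h : Tendsto (fun K => (hF K).toLp (F K)) atTop (𝓝 (hf.toLp f))) :
    Tendsto (fun K => cov[X, F K; μ]) atTop (𝓝 cov[X, f; μ]) := by
  have h1 : MemLp (fun _ => (1 : ℝ)) 2 μ := memLp_const 1
  have hcov : ∀ {Y : Ω → ℝ} (hY : MemLp Y 2 μ), cov[X, Y; μ] =
      ⟪hX.toLp X, hY.toLp Y⟫_ℝ - μ[X] * ⟪h1.toLp _, hY.toLp Y⟫_ℝ := fun hY => by
    rw [covariance_eq_sub hX hY, ← integral_mul_eq_inner_toLp, ← integral_mul_eq_inner_toLp]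
    simp
  simp only [hcov (hF _), hcov hf]
  exact (tendsto_const_nhds.inner h).sub (tendsto_const_nhds.mul (tendsto_const_nhds.inner h))

lemma covariance_eq_integral_mul_of_integral_eq_zero [IsProbabilityMeasure μ] {X Y : Ω → ℝ}
    (hX : MemLp X 2 μ) (hY : MemLp Y 2 μ) (hX0 : μ[X] = 0) :
    cov[X, Y; μ] = ∫ ω, X ω * Y ω ∂μ := by
  rw [covariance_eq_sub hX hY, hX0, zero_mul, sub_zero]
  rfl

end L2

structure IsAR2Green (φ₁ φ₂ : ℤ → ℝ) (ξ : ℤ → ℤ → ℝ) : Prop where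
  zero : ∀ t, ξ t 0 = 1
  neg_one : ∀ t, ξ t (-1) = 0
  recurrence : ∀ t i : ℤ, 1 ≤ i → ξ t i = φ₁ t * ξ (t - 1) (i - 1) + φ₂ t * ξ (t - 2) (i - 2)

namespace IsAR2Green

variable {φ₁ φ₂ : ℤ → ℝ} {ξ : ℤ → ℤ → ℝ}

lemma add (hξ : IsAR2Green φ₁ φ₂ ξ) {k : ℕ} (hk : 1 ≤ k) (t : ℤ) (j : ℕ) :
    ξ t (k + j) = ξ t k * ξ (t - k) j + φ₂ (t - k + 1) * ξ t (k - 1) * ξ (t - k - 1) (j - 1) := by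
  obtain ⟨hξ0, hξm1, hξrec⟩ := hξ
  have hξ1 : ∀ t, ξ t 1 = φ₁ t := fun t => by simpa [hξ0, hξm1] using hξrec t 1 le_rfl
  induction k, hk using Nat.le_induction generalizing j with
  | base =>
    have h := hξrec t (1 + j) (by omega)
    simp only [Nat.cast_one, hξ1, sub_self, hξ0, add_sub_cancel_left] at h ⊢
    rw [h, show (1 : ℤ) + j - 2 = j - 1 by ring, show t - 1 - 1 = t - 2 by ring,
      show t - 1 + 1 = t by ring]
    ring
  | succ k hk ih =>
    have hj := ih (j + 1)
    have h1 := ih 1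
    have hrec := hξrec (t - k) (j + 1) (by omega)
    push_cast at hj h1 ⊢
    simp only [hξ0, hξ1, mul_one] at h1
    rw [show (k : ℤ) + 1 + j = k + (j + 1) by ring, hj, hrec, h1]
    rw [show (j : ℤ) + 1 - 1 = j by ring, show (j : ℤ) + 1 - 2 = j - 1 by ring,
      show t - (k + 1) = t - k - 1 by ring, show t - k - 1 + 1 = t - k by ring,
      show (k : ℤ) + 1 - 1 = k by ring, show t - k - 1 - 1 = t - k - 2 by ring]
    ring

end IsAR2Green

section MovingAverage

variable {Ω : Type*} {m : MeasurableSpace Ω} {μ : Measure Ω}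

def maPartialSum (ε : ℤ → Ω → ℝ) (φ₀ : ℤ → ℝ) (ξ : ℤ → ℤ → ℝ) (u : ℤ) (K : ℕ) : Ω → ℝ :=
  fun ω => ∑ i ∈ range K, ξ u i * (φ₀ (u - i) + ε (u - i) ω)

variable {ε : ℤ → Ω → ℝ} {φ₀ φ₁ φ₂ : ℤ → ℝ} {ξ : ℤ → ℤ → ℝ}

lemma memLp_maPartialSum [IsFiniteMeasure μ] (hε : ∀ τ, MemLp (ε τ) 2 μ) (u : ℤ) (K : ℕ) :
    MemLp (maPartialSum ε φ₀ ξ u K) 2 μ :=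
  memLp_finsetSum _ fun i _ => ((memLp_const (φ₀ (u - i))).add (hε (u - i))).const_mul (ξ u i)

lemma maPartialSum_add (hξ : IsAR2Green φ₁ φ₂ ξ) {k : ℕ} (hk : 1 ≤ k) (t : ℤ) (K : ℕ) :
    maPartialSum ε φ₀ ξ t (k + (K + 1)) = maPartialSum ε φ₀ ξ t k
      + ξ t k • maPartialSum ε φ₀ ξ (t - k) (K + 1)
      + (φ₂ (t - k + 1) * ξ t (k - 1)) • maPartialSum ε φ₀ ξ (t - k - 1) K := by
  funext ω
  set x : ℤ → ℝ := fun τ => φ₀ τ + ε τ ω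
  have hterm : ∀ j ∈ range (K + 1), ξ t (k + j : ℕ) * x (t - (k + j : ℕ)) =
      ξ t k * (ξ (t - k) j * x (t - k - j))
        + φ₂ (t - k + 1) * ξ t (k - 1) * (ξ (t - k - 1) (j - 1) * x (t - k - j)) := fun j _ => by
    rw [Nat.cast_add, hξ.add hk, sub_add_eq_sub_sub]
    ring
  have htail : ∑ j ∈ range (K + 1), ξ (t - k - 1) (j - 1) * x (t - k - j)
      = ∑ i ∈ range K, ξ (t - k - 1) i * x (t - k - 1 - i) := by
    rw [sum_range_succ']
    simp only [Nat.cast_add, Nat.cast_one, Nat.cast_zero, zero_sub, hξ.neg_one, zero_mul,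
      add_zero, add_sub_cancel_right, sub_add_eq_sub_sub, sub_right_comm _ (1 : ℤ)]
  simp only [maPartialSum, Pi.add_apply, Pi.smul_apply, smul_eq_mul]
  rw [sum_range_add _ k (K + 1), sum_congr rfl hterm, sum_add_distrib, ← mul_sum, ← mul_sum,
    htail, add_assoc]

lemma covariance_maPartialSum_right [IsProbabilityMeasure μ] (hε : ∀ τ, MemLp (ε τ) 2 μ)
    {X : Ω → ℝ} (hX : MemLp X 2 μ) (u : ℤ) (K : ℕ) :
    cov[X, maPartialSum ε φ₀ ξ u K; μ] = ∑ i ∈ range K, ξ u i * cov[X, ε (u - i); μ] := by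
  have hterm : ∀ i : ℕ, MemLp (fun ω => ξ u i * (φ₀ (u - i) + ε (u - i) ω)) 2 μ := fun i =>
    ((memLp_const (φ₀ (u - i))).add (hε (u - i))).const_mul (ξ u i)
  unfold maPartialSum
  rw [covariance_fun_sum_right' (X := fun (i : ℕ) ω => ξ u i * (φ₀ (u - i) + ε (u - i) ω))
    (fun i _ => hterm i) hX]
  refine sum_congr rfl fun i _ => ?_
  rw [covariance_const_mul_right, covariance_const_add_right ((hε _).integrable one_le_two)]

end MovingAverage

section Representation

variable {Ω : Type*} {m : MeasurableSpace Ω} {μ : Measure Ω} [IsProbabilityMeasure μ]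
  {ε y : ℤ → Ω → ℝ} {φ₀ φ₁ φ₂ : ℤ → ℝ} {ξ : ℤ → ℤ → ℝ}

lemma tendsto_toLp_maPartialSum (hεL2 : ∀ τ, MemLp (ε τ) 2 μ) (hyL2 : ∀ t, MemLp (y t) 2 μ)
    (hyMA : ∀ t, Tendsto (fun K => eLpNorm (y t - maPartialSum ε φ₀ ξ t K) 2 μ) atTop (𝓝 0))
    (u : ℤ) :
    Tendsto (fun K => (memLp_maPartialSum hεL2 u K).toLp (maPartialSum ε φ₀ ξ u K)) atTop
      (𝓝 ((hyL2 u).toLp (y u))) := by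
  rw [Lp.tendsto_Lp_iff_tendsto_eLpNorm'']
  simpa only [eLpNorm_sub_comm] using hyMA u

lemma covariance_innovation_eq_zero_of_lt (hεL2 : ∀ τ, MemLp (ε τ) 2 μ)
    (hεmean : ∀ τ, ∫ ω, ε τ ω ∂μ = 0)
    (hεuncorr : ∀ s τ : ℤ, s ≠ τ → ∫ ω, ε s ω * ε τ ω ∂μ = 0) (hyL2 : ∀ t, MemLp (y t) 2 μ)
    (hyMA : ∀ t, Tendsto (fun K => eLpNorm (y t - maPartialSum ε φ₀ ξ t K) 2 μ) atTop (𝓝 0))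
    {s u : ℤ} (h : u < s) :
    cov[ε s, y u; μ] = 0 := by
  refine tendsto_nhds_unique (tendsto_covariance_right (hεL2 s) (hyL2 u) _
    (tendsto_toLp_maPartialSum hεL2 hyL2 hyMA u)) (tendsto_const_nhds.congr fun K => ?_)
  rw [covariance_maPartialSum_right hεL2 (hεL2 s)]
  refine (sum_eq_zero fun i _ => ?_).symm
  rw [covariance_eq_integral_mul_of_integral_eq_zero (hεL2 s) (hεL2 _) (hεmean s),
    hεuncorr _ _ (by omega), mul_zero]

lemma ae_eq_maPartialSum_add_smul (hξ : IsAR2Green φ₁ φ₂ ξ) (hεL2 : ∀ τ, MemLp (ε τ) 2 μ)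
    (hyL2 : ∀ t, MemLp (y t) 2 μ)
    (hyMA : ∀ t, Tendsto (fun K => eLpNorm (y t - maPartialSum ε φ₀ ξ t K) 2 μ) atTop (𝓝 0))
    {k : ℕ} (hk : 1 ≤ k) (t : ℤ) :
    y t =ᵐ[μ] maPartialSum ε φ₀ ξ t k + ξ t k • y (t - k)
      + (φ₂ (t - k + 1) * ξ t (k - 1)) • y (t - k - 1) := by
  set a := ξ t k
  set c := φ₂ (t - k + 1) * ξ t (k - 1)
  have hS := memLp_maPartialSum (φ₀ := φ₀) (ξ := ξ) hεL2
  have hlim := tendsto_toLp_maPartialSum hεL2 hyL2 hyMA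
  have hsplit : ∀ K, (hS t (k + (K + 1))).toLp _ = (hS t k).toLp _
      + a • (hS (t - k) (K + 1)).toLp _ + c • (hS (t - k - 1) K).toLp _ := fun K => by
    rw [← MemLp.toLp_const_smul, ← MemLp.toLp_const_smul, ← MemLp.toLp_add, ← MemLp.toLp_add]
    exact MemLp.toLp_congr _ _ (.of_eq (maPartialSum_add hξ hk t K))
  have hYa := (hyL2 (t - k)).const_smul a
  have hYc := (hyL2 (t - k - 1)).const_smul c
  have hrhs := ((hS t k).add hYa).add hYc
  have hshift : Tendsto (fun K : ℕ => k + (K + 1)) atTop atTop :=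
    (tendsto_add_atTop_nat (k + 1)).congr fun K => by omega
  refine (MemLp.toLp_eq_toLp_iff (hyL2 t) hrhs).1
    (tendsto_nhds_unique ((hlim t).comp hshift) ?_)
  rw [MemLp.toLp_add ((hS t k).add hYa) hYc, MemLp.toLp_add (hS t k) hYa,
    MemLp.toLp_const_smul a (hyL2 _), MemLp.toLp_const_smul c (hyL2 _)]
  refine Tendsto.congr (fun K => (hsplit K).symm) ?_
  exact (tendsto_const_nhds.add (((hlim _).comp (tendsto_add_atTop_nat 1)).const_smul a)).add
    ((hlim _).const_smul c)

end Representation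

theorem autocovariance_recursion_tvar2_general
    {Ω : Type*} {m : MeasurableSpace Ω} {μ : Measure Ω} [IsProbabilityMeasure μ]
    (ε : ℤ → Ω → ℝ) (y : ℤ → Ω → ℝ) (φ₀ φ₁ φ₂ : ℤ → ℝ) (ξ : ℤ → ℤ → ℝ)
    (hξ0 : ∀ t, ξ t 0 = 1) (hξm1 : ∀ t, ξ t (-1) = 0)
    (hξrec : ∀ t i : ℤ, 1 ≤ i →
      ξ t i = φ₁ t * ξ (t - 1) (i - 1) + φ₂ t * ξ (t - 2) (i - 2))
    (hεL2 : ∀ τ, MemLp (ε τ) 2 μ)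
    (hεmean : ∀ τ, ∫ ω, ε τ ω ∂μ = 0)
    (hεuncorr : ∀ s τ : ℤ, s ≠ τ → ∫ ω, ε s ω * ε τ ω ∂μ = 0)
    (hyL2 : ∀ t, MemLp (y t) 2 μ)
    (hyMA : ∀ t, Tendsto
      (fun K : ℕ => eLpNorm
        (y t - fun ω => ∑ i ∈ Finset.range K,
          ξ t i * (φ₀ (t - (i : ℤ)) + ε (t - (i : ℤ)) ω)) 2 μ)
      atTop (nhds 0))
    (t : ℤ) (k : ℕ) (hk : 1 ≤ k) :
    ∫ ω, (y t ω - ∫ ω', y t ω' ∂μ)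
        * (y (t - (k : ℤ)) ω - ∫ ω', y (t - (k : ℤ)) ω' ∂μ) ∂μ
      = ξ t k * (∫ ω, (y (t - (k : ℤ)) ω - ∫ ω', y (t - (k : ℤ)) ω' ∂μ) ^ 2 ∂μ)
        + φ₂ (t - (k : ℤ) + 1) * ξ t ((k : ℤ) - 1)
            * ∫ ω, (y (t - (k : ℤ)) ω - ∫ ω', y (t - (k : ℤ)) ω' ∂μ)
                * (y (t - (k : ℤ) - 1) ω - ∫ ω', y (t - (k : ℤ) - 1) ω' ∂μ) ∂μ := by
  have hS := memLp_maPartialSum (φ₀ := φ₀) (ξ := ξ) hεL2 t k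
  have hYk := hyL2 (t - k)
  have hnoise : cov[maPartialSum ε φ₀ ξ t k, y (t - k); μ] = 0 := by
    rw [covariance_comm, covariance_maPartialSum_right hεL2 hYk]
    refine sum_eq_zero fun i hi => ?_
    rw [covariance_comm, covariance_innovation_eq_zero_of_lt hεL2 hεmean hεuncorr hyL2 hyMA
      (by rw [mem_range] at hi; omega), mul_zero]
  change cov[y t, y (t - k); μ] = _ * _ + _ * cov[y (t - k), y (t - k - 1); μ]
  have hy := ae_eq_maPartialSum_add_smul ⟨hξ0, hξm1, hξrec⟩ hεL2 hyL2 hyMA hk t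
  rw [covariance_congr_left hy,
    covariance_add_left (hS.add (hYk.const_smul _)) ((hyL2 _).const_smul _) hYk,
    covariance_add_left hS (hYk.const_smul _) hYk, covariance_smul_left, covariance_smul_left,
    hnoise, covariance_self hYk.aemeasurable, variance_eq_integral hYk.aemeasurable,
    covariance_comm (y (t - k - 1)), zero_add]

/-- Under Assumption A.1, the autocovariance satisfies the Green-function
recursion `γ_{t,k} = ξ_{t,k}·Var(y_{t-k}) + φ₂(t-k+1)·ξ_{t,k-1}·Cov(y_{t-k}, y_{t-k-1})`
for all `k ≥ 1`. -/
theorem autocovariance_recursion_tvar2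
    {Ω : Type*} {m : MeasurableSpace Ω} {μ : Measure Ω} [IsProbabilityMeasure μ]
    (ε : ℤ → Ω → ℝ) (y : ℤ → Ω → ℝ) (φ₀ φ₁ φ₂ : ℤ → ℝ) (σ2 : ℤ → ℝ) (ξ : ℤ → ℤ → ℝ)
    (hξ0 : ∀ t, ξ t 0 = 1) (hξm1 : ∀ t, ξ t (-1) = 0)
    (hξrec : ∀ t i : ℤ, 1 ≤ i →
      ξ t i = φ₁ t * ξ (t - 1) (i - 1) + φ₂ t * ξ (t - 2) (i - 2))
    (hεL2 : ∀ τ, MemLp (ε τ) 2 μ)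
    (hεmean : ∀ τ, ∫ ω, ε τ ω ∂μ = 0)
    (hεuncorr : ∀ s τ : ℤ, s ≠ τ → ∫ ω, ε s ω * ε τ ω ∂μ = 0)
    (hσ : ∀ τ, σ2 τ = ∫ ω, (ε τ ω) ^ 2 ∂μ)
    (hyL2 : ∀ t, MemLp (y t) 2 μ)
    (hyMA : ∀ t, Tendsto
      (fun K : ℕ => eLpNorm
        (y t - fun ω => ∑ i ∈ Finset.range K,
          ξ t i * (φ₀ (t - (i : ℤ)) + ε (t - (i : ℤ)) ω)) 2 μ)
      atTop (nhds 0))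
    (t : ℤ) (k : ℕ) (hk : 1 ≤ k) :
    ∫ ω, (y t ω - ∫ ω', y t ω' ∂μ)
        * (y (t - (k : ℤ)) ω - ∫ ω', y (t - (k : ℤ)) ω' ∂μ) ∂μ
      = ξ t k * (∫ ω, (y (t - (k : ℤ)) ω - ∫ ω', y (t - (k : ℤ)) ω' ∂μ) ^ 2 ∂μ)
        + φ₂ (t - (k : ℤ) + 1) * ξ t ((k : ℤ) - 1)
            * ∫ ω, (y (t - (k : ℤ)) ω - ∫ ω', y (t - (k : ℤ)) ω' ∂μ)
                * (y (t - (k : ℤ) - 1) ω - ∫ ω', y (t - (k : ℤ) - 1) ω' ∂μ) ∂μ :=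
  autocovariance_recursion_tvar2_general (m := m) ε y φ₀ φ₁ φ₂ ξ hξ0 hξm1 hξrec hεL2 hεmean hεuncorr
    hyL2 hyMA t k hk
end

section
/- For the abrupt-breaks AR(2) with r breaks, the determinant ξ_{t,k} of the k×k block tridiagonal matrix decomposes as ξ_{t,k} = Σ over (i₁,...,i_r) ∈ {0,1}^r of ξ_{t,k₁−i₁} · Π_{j=2}^{r} φ_{2,j-1}^{i_{j-1}} ξ_{t−k_{j-1}−i_{j-1}, k_j−k_{j-1}−i_j−i_{j-1}} · φ_{2,r}^{i_r} ξ_{t−k_r−i_r, k−k_r−i_r}, where each within-regime ξ is a determinant of a constant-coefficient tridiagonal matrix. -/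
/-!
`ξ_{t,k}` is a continuant. Cutting its tridiagonal matrix after `m` rows gives
`ξ_{t,n} = ξ_{t,m} ξ_{t-m,n-m} + φ₂(t-m+1) ξ_{t,m-1} ξ_{t-m-1,n-m-1}` (the case `r = 1`), by a
two-step induction on `m` from the first-row expansion. Cutting at the last break `k_r` and
recursing on the two determinants `ξ_{t,k_r-i}`, `i ∈ {0,1}`, whose last regime is shortened by
`i`, produces the sum over `{0,1}^r`.
-/

open Finset

variable {R : Type*} [CommRing R]

/-- `ξ t i` is the determinant of the `i × i` tridiagonal block of `Φ` starting at time `t`,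
given through its expansion along the first row. -/
structure IsContinuant_s16 (φ₁ φ₂ : ℤ → R) (ξ : ℤ → ℤ → R) : Prop where
  zero : ∀ t, ξ t 0 = 1
  neg_one : ∀ t, ξ t (-1) = 0
  step : ∀ t i, 1 ≤ i → ξ t i = φ₁ t * ξ (t - 1) (i - 1) + φ₂ t * ξ (t - 2) (i - 2)

def regimeFactor (φ₂ : ℤ → R) (ξ : ℤ → ℤ → R) (t kj ij n : ℤ) : R :=
  (if ij = 0 then 1 else φ₂ (t - kj + 1)) * ξ (t - kj - ij) (n - kj - ij)

/-- The summand of (B.8) for the choice `i`, with the last boundary `k_{r+1}` left free as `n`. -/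
def regimeProduct (φ₂ : ℤ → R) (ξ : ℤ → ℤ → R) (t : ℤ) (K i : ℕ → ℤ) (r : ℕ) (n : ℤ) : R :=
  (∏ j ∈ range r, regimeFactor φ₂ ξ t (K j) (i j) (K (j + 1) - i (j + 1)))
    * regimeFactor φ₂ ξ t (K r) (i r) n

/-- The sequence `(i₀, i₁, …, i_r, 0, 0, …)` with `i₀ = 0` and `i_j = c (j - 1)`. -/
def choiceSeq {r : ℕ} (c : Fin r → Fin 2) (j : ℕ) : ℤ :=
  if h : 0 < j ∧ j ≤ r then (c ⟨j - 1, by omega⟩ : ℕ) else 0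

section Choices

variable {r : ℕ} (c : Fin r → Fin 2) (a : Fin 2)

theorem choiceSeq_snoc_of_le {j : ℕ} (hj : j ≤ r) :
    choiceSeq (Fin.snoc c a : Fin (r + 1) → Fin 2) j = choiceSeq c j := by
  by_cases h0 : 0 < j
  · simp [choiceSeq, h0, hj, Nat.le_succ_of_le hj, Fin.snoc, show j - 1 < r by omega]
  · simp [choiceSeq, h0]

theorem choiceSeq_snoc_last : choiceSeq (Fin.snoc c a : Fin (r + 1) → Fin 2) (r + 1) = a := by
  simp [choiceSeq, Fin.snoc]

end Choices

section Regimes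

variable (φ₂ : ℤ → R) (ξ : ℤ → ℤ → R) (t : ℤ) (K : ℕ → ℤ)

theorem regimeProduct_succ (i : ℕ → ℤ) (r : ℕ) (n : ℤ) :
    regimeProduct φ₂ ξ t K i (r + 1) n
      = regimeProduct φ₂ ξ t K i r (K (r + 1) - i (r + 1))
        * regimeFactor φ₂ ξ t (K (r + 1)) (i (r + 1)) n := by
  rw [regimeProduct, prod_range_succ]
  rfl

theorem regimeProduct_congr {i i' : ℕ → ℤ} {r : ℕ} (h : ∀ j ≤ r, i j = i' j) (n : ℤ) :
    regimeProduct φ₂ ξ t K i r n = regimeProduct φ₂ ξ t K i' r n := by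
  unfold regimeProduct
  rw [h r le_rfl]
  congr 1
  refine prod_congr rfl fun j hj => ?_
  rw [mem_range] at hj
  rw [h j hj.le, h (j + 1) hj]

theorem regimeProduct_choiceSeq_snoc {r : ℕ} (c : Fin r → Fin 2) (a : Fin 2) (n : ℤ) :
    regimeProduct φ₂ ξ t K (choiceSeq (Fin.snoc c a : Fin (r + 1) → Fin 2)) (r + 1) n
      = regimeProduct φ₂ ξ t K (choiceSeq c) r (K (r + 1) - a)
        * regimeFactor φ₂ ξ t (K (r + 1)) a n := by
  rw [regimeProduct_succ, choiceSeq_snoc_last,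
    regimeProduct_congr φ₂ ξ t K fun j hj => choiceSeq_snoc_of_le c a hj]

end Regimes

namespace IsContinuant_s16

variable {φ₁ φ₂ : ℤ → R} {ξ : ℤ → ℤ → R}

theorem split (hξ : IsContinuant_s16 φ₁ φ₂ ξ) (t m n : ℤ) (hm : 0 ≤ m) (hmn : m ≤ n) :
    ξ t n = ξ t m * ξ (t - m) (n - m)
      + φ₂ (t - m + 1) * ξ t (m - 1) * ξ (t - m - 1) (n - m - 1) := by
  lift m to ℕ using hm
  induction m using Nat.twoStepInduction generalizing t n with
  | zero => simp [hξ.zero, hξ.neg_one]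
  | one =>
    have hξ1 : ξ t 1 = φ₁ t := by simpa [hξ.zero, hξ.neg_one] using hξ.step t 1 le_rfl
    push_cast at hmn ⊢
    rw [hξ.step t n (by omega), hξ1]
    simp [hξ.zero, sub_sub]
  | more m ih₀ ih₁ =>
    -- expand the first row and cut both minors; the coefficients recombine into the
    -- first-row expansions of `ξ t (m + 2)` and `ξ t (m + 1)`
    push_cast at hmn ⊢
    have h₁ := ih₁ (t - 1) (n - 1) (by push_cast; omega)
    have h₀ := ih₀ (t - 2) (n - 2) (by omega)
    have hn := hξ.step t n (by omega)
    have hm₂ := hξ.step t (m + 2) (by omega)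
    have hm₁ := hξ.step t (m + 1) (by omega)
    push_cast at h₁
    ring_nf at h₀ h₁ hn hm₂ hm₁ ⊢
    linear_combination hn + φ₁ t * h₁ + φ₂ t * h₀
      - ξ (-2 + t - m) (-2 + n - m) * hm₂
      - φ₂ (-1 + t - m) * ξ (-3 + t - m) (-3 + n - m) * hm₁

theorem eq_sum_regimeFactor (hξ : IsContinuant_s16 φ₁ φ₂ ξ) (t m n : ℤ) (hm : 0 ≤ m) (hmn : m ≤ n) :
    ξ t n = ∑ a : Fin 2, ξ t (m - a) * regimeFactor φ₂ ξ t m a n := by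
  rw [Fin.sum_univ_two, hξ.split t m n hm hmn]
  simp [regimeFactor, sub_sub, mul_comm, mul_assoc, mul_left_comm]

theorem eq_sum_regimeProduct (hξ : IsContinuant_s16 φ₁ φ₂ ξ) (t : ℤ) {K : ℕ → ℤ} (hK0 : K 0 = 0)
    (r : ℕ) (hK : StrictMonoOn K (Set.Iic r)) (n : ℤ) (hn : K r ≤ n) :
    ξ t n = ∑ c : Fin r → Fin 2, regimeProduct φ₂ ξ t K (choiceSeq c) r n := by
  induction r generalizing n with
  | zero => simp [regimeProduct, regimeFactor, choiceSeq, hK0]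
  | succ r ih =>
    have hKr : K r < K (r + 1) := hK (by simp) (by simp) r.lt_succ_self
    have hK₁ : 0 ≤ K (r + 1) := hK0 ▸ hK.monotoneOn (by simp) (by simp) r.succ.zero_le
    have ih' (a : Fin 2) := ih (hK.mono (Set.Iic_subset_Iic.2 r.le_succ)) (K (r + 1) - a)
      (by have := a.isLt; omega)
    calc ξ t n = ∑ a : Fin 2, ξ t (K (r + 1) - a) * regimeFactor φ₂ ξ t (K (r + 1)) a n :=
          hξ.eq_sum_regimeFactor t _ n hK₁ hn
      _ = ∑ a : Fin 2, ∑ c : Fin r → Fin 2,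
            regimeProduct φ₂ ξ t K (choiceSeq (Fin.snoc c a : Fin (r + 1) → Fin 2)) (r + 1) n := by
          simp_rw [regimeProduct_choiceSeq_snoc, ← sum_mul, ← ih']
      _ = _ := by
          rw [← Fintype.sum_prod_type', ← (Fin.snocEquiv fun _ => Fin 2).sum_comp]
          rfl

end IsContinuant_s16

/-- Eq. (B.8) of the paper: for the abrupt-breaks AR(2) with `r ≥ 1` breaks at
times `t-k₁ < … < t-k_r` (with `0 = k₀ < k₁ < … < k_r < k_{r+1} = k`), the
Green-function determinant decomposes as a sum over `(i₁,…,i_r) ∈ {0,1}^r`: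
`ξ_{t,k} = Σ ξ_{t,k₁−i₁} · (Π_{j=2}^{r} φ_{2,j-1}^{i_{j-1}}
  ξ_{t−k_{j-1}−i_{j-1}, k_j−k_{j-1}−i_j−i_{j-1}}) · φ_{2,r}^{i_r}
  ξ_{t−k_r−i_r, k−k_r−i_r}`,
where `φ_{2,j}^{i_j}` denotes the factor `1` if `i_j = 0` and `φ₂(t−k_j+1)` if
`i_j = 1`. -/
theorem abrupt_breaks_xi_decomposition
    (φ₁ φ₂ : ℤ → ℝ) (ξ : ℤ → ℤ → ℝ)
    (hξ0 : ∀ t, ξ t 0 = 1) (hξm1 : ∀ t, ξ t (-1) = 0)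
    (hξrec : ∀ t i : ℤ, 1 ≤ i →
      ξ t i = φ₁ t * ξ (t - 1) (i - 1) + φ₂ t * ξ (t - 2) (i - 2))
    (t : ℤ) (k : ℤ) (r : ℕ) (hr : 1 ≤ r) (K : ℕ → ℤ)
    (hK0 : K 0 = 0) (hKend : K (r + 1) = k)
    (hKmono : ∀ j : ℕ, j ≤ r → K j < K (j + 1)) :
    ξ t k =
      ∑ c : Fin r → Fin 2,
        (ξ t (K 1 - ((c ⟨0, by omega⟩ : ℕ) : ℤ)))
          * (∏ j ∈ Finset.Ico 2 (r + 1),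
              (if h : 2 ≤ j ∧ j ≤ r + 1 then
                (if c ⟨j - 2, by omega⟩ = 0 then (1 : ℝ)
                  else φ₂ (t - K (j - 1) + 1))
                * ξ (t - K (j - 1) - ((c ⟨j - 2, by omega⟩ : ℕ) : ℤ))
                    (K j - K (j - 1) - (if h2 : j ≤ r then ((c ⟨j - 1, by omega⟩ : ℕ) : ℤ) else 0)
                      - ((c ⟨j - 2, by omega⟩ : ℕ) : ℤ))
              else 1))
          * (if c ⟨r - 1, by omega⟩ = 0 then (1 : ℝ) else φ₂ (t - K r + 1))
          * ξ (t - K r - ((c ⟨r - 1, by omega⟩ : ℕ) : ℤ))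
              (k - K r - ((c ⟨r - 1, by omega⟩ : ℕ) : ℤ)) := by
  have hξ : IsContinuant_s16 φ₁ φ₂ ξ := ⟨hξ0, hξm1, hξrec⟩
  have hK : StrictMonoOn K (Set.Iic r) := strictMonoOn_Iic_of_lt_succ fun j hj => hKmono j hj.le
  rw [hξ.eq_sum_regimeProduct t hK0 r hK k (hKend ▸ (hKmono r le_rfl).le)]
  refine sum_congr rfl fun c _ => ?_
  obtain ⟨m, rfl⟩ : ∃ m, r = m + 1 := ⟨r - 1, by omega⟩
  rw [regimeProduct, prod_range_succ', prod_Ico_eq_prod_range]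
  simp only [Nat.add_sub_cancel]
  rw [mul_comm (∏ _ ∈ _, _), regimeFactor, regimeFactor, mul_assoc _ (ite _ _ _)]
  congr 2
  · simp [choiceSeq, hK0]
  · refine prod_congr rfl fun j hj => ?_
    have hjm : j < m := by simpa using hj
    simp only [regimeFactor, choiceSeq, lt_add_iff_pos_left, Order.lt_add_one_iff, zero_le,
      add_le_add_iff_right, hjm.le, and_self, ↓reduceDIte, add_tsub_cancel_right,
      Int.natCast_eq_zero, Fin.val_eq_zero_iff, Fin.isValue, add_pos_iff, Order.lt_two_iff, or_true,
      show j + 2 ≤ m + 1 by omega, ite_mul, one_mul, add_comm _ j, le_add_iff_nonneg_left,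
      Nat.add_one_sub_one]
    ring_nf
  · simp [choiceSeq]
  · simp [choiceSeq]
end
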